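/- arXiv:2409.15467 — 3 statements merged into one kernel-verified Lean document; each statement's English description precedes it below -/
import Mathlib

section
/- Let P and R be k×k row-stochastic matrices (k ≥ 2) with r_{i,i} = 0 for all i, and let α ∈ ℝ^k be a probability vector with strictly positive entries. Suppose the compatibility conditions α_j(1 − (k−1) p_{j,j} r_{j,i}) = (k−1) α_i p_{i,j} hold for all i ≠ j. Then α is an invariant measure for P, i.e. Σ_i α_i p_{i,j} = α_j for all j. -/
theorem stmt_4 (k : ℕ) (hk : 2 ≤ k)
    (P R : Fin k → Fin k → ℝ) (α : Fin k → ℝ)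
    (hPnn : ∀ i j, 0 ≤ P i j) (hProw : ∀ i, ∑ j, P i j = 1)
    (hRnn : ∀ i j, 0 ≤ R i j) (hRrow : ∀ i, ∑ j, R i j = 1)
    (hRdiag : ∀ i, R i i = 0)
    (hαpos : ∀ j, 0 < α j) (hαsum : ∑ j, α j = 1)
    (hcomp : ∀ i j, i ≠ j →
      α j * (1 - ((k : ℝ) - 1) * P j j * R j i) = ((k : ℝ) - 1) * α i * P i j) :
    ∀ j, ∑ i, α i * P i j = α j := by
  intro j
  have hk1 : ((k : ℝ) - 1) ≠ 0 := by
    have : (2 : ℝ) ≤ (k : ℝ) := by exact_mod_cast hk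
    linarith
  have hcard : ((Finset.univ.erase j).card : ℝ) = (k : ℝ) - 1 := by
    rw [Finset.card_erase_of_mem (Finset.mem_univ j)]
    simp
    have : 1 ≤ k := le_trans (by norm_num) hk
    push_cast [Nat.cast_sub this]
    ring
  have hRsum : ∑ i ∈ Finset.univ.erase j, R j i = 1 := by
    have := hRrow j
    rw [← Finset.add_sum_erase _ _ (Finset.mem_univ j), hRdiag j, zero_add] at this
    exact this
  have hS : ((k : ℝ) - 1) * ∑ i ∈ Finset.univ.erase j, α i * P i j
      = ((k : ℝ) - 1) * (α j * (1 - P j j)) := by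
    rw [Finset.mul_sum]
    have h1 : ∀ i ∈ Finset.univ.erase j, ((k : ℝ) - 1) * (α i * P i j)
        = α j * (1 - ((k : ℝ) - 1) * P j j * R j i) := by
      intro i hi
      have := hcomp i j (Finset.ne_of_mem_erase hi)
      linarith
    rw [Finset.sum_congr rfl h1]
    calc ∑ i ∈ Finset.univ.erase j, α j * (1 - ((k : ℝ) - 1) * P j j * R j i)
        = ∑ i ∈ Finset.univ.erase j, (α j - α j * (((k : ℝ) - 1) * P j j) * R j i) := by
          apply Finset.sum_congr rfl; intro i _; ring
      _ = ((Finset.univ.erase j).card : ℝ) * α j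
            - α j * (((k : ℝ) - 1) * P j j) * ∑ i ∈ Finset.univ.erase j, R j i := by
          rw [Finset.sum_sub_distrib, Finset.sum_const, ← Finset.mul_sum, nsmul_eq_mul]
      _ = ((k : ℝ) - 1) * (α j * (1 - P j j)) := by rw [hRsum, hcard]; ring
  have hS' : ∑ i ∈ Finset.univ.erase j, α i * P i j = α j * (1 - P j j) :=
    mul_left_cancel₀ hk1 hS
  rw [← Finset.add_sum_erase _ _ (Finset.mem_univ j), hS']
  ring
end

section
/- Let k ≥ 3, δ ∈ [1/(k−1), 1], γ₀ = (k−1)((k−1)δ − 1)/(k(k−2)δ), and γ ∈ [γ₀, 1]. Let α be an ordered probability vector with positive entries α_1 ≤ … ≤ α_k. Define R by r_{1,2} = δ, r_{1,j} = (1−δ)/(k−2) for j = 3,…,k, r_{i,j} = 1/(k−1) for i ≠ 1 and j ≠ i, r_{i,i} = 0; and define P by p_{1,1} = k(k−2)(1−γ)/((k−1−δ)(k−1)), p_{2,2} = 1 − (α_1/α_2)·((k−2)(δ+1)γ − (k−1)δ + 1)/(k−1−δ), p_{i,i} = 1 − (α_1/α_i)γ for i ≥ 3, p_{2,1} = α_1(1−(k−1)δ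 p_{1,1})/(α_2(k−1)), p_{i,1} = α_1(1 − ((k−1)/(k−2))(1−δ)p_{1,1})/(α_i(k−1)) for i ≥ 3, and p_{i,j} = α_j(1−p_{j,j})/(α_i(k−1)) for i ≠ j, j ≥ 2. Then P and R are both row-stochastic matrices with nonnegative entries satisfying α_j(1 − (k−1)p_{j,j} r_{j,i}) = (k−1)α_i p_{i,j} for all i ≠ j. -/
/-!
Off the diagonal, `P` is the solution of the compatibility equations for its diagonal, so
compatibility holds by construction and `p_ij ≥ 0` reduces to `(k - 1) p_jj r_ji ≤ 1`. For
`j = i0` this is the condition `γ ≥ γ₀`, in the form `k (k - 2) δ (1 - γ) ≤ k - 1 - δ`. Since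
`α_j (1 - p_jj) = α_{i0} γ` for every `j ∉ {i0, i1}`, each row of `P` is constant off the columns
`i`, `i0`, `i1`, and the row sums reduce to rational identities in `k`, `δ`, `γ`.
-/

open Finset

lemma sum_univ_eq_sum_add_of_eq_off {ι : Type*} [Fintype ι] [DecidableEq ι] (s : Finset ι)
    {f : ι → ℝ} {c : ℝ} (hf : ∀ j ∉ s, f j = c) :
    ∑ j, f j = ∑ j ∈ s, f j + ((Fintype.card ι : ℝ) - #s) * c := by
  rw [← sum_add_sum_compl s f, sum_congr rfl fun j hj => hf j (mem_compl.1 hj), sum_const,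
    card_compl, nsmul_eq_mul, Nat.cast_sub (card_le_univ s)]

lemma Fin.one_lt_natCast_of_ne {k : ℕ} {i j : Fin k} (hij : i ≠ j) : (1 : ℝ) < k := by
  have := Fin.val_ne_of_ne hij
  have := i.isLt
  have := j.isLt
  exact_mod_cast (by omega : 1 < k)

section Scalar

variable {K δ γ : ℝ}

-- `γ ≥ γ₀` is equivalent to this inequality because `K (K - 2) = (K - 1)² - 1`.
lemma mul_one_sub_le_of_gamma0_le (hK : 2 < K) (hδ : 0 < δ)
    (hγ : (K - 1) * ((K - 1) * δ - 1) / (K * (K - 2) * δ) ≤ γ) :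
    K * (K - 2) * δ * (1 - γ) ≤ K - 1 - δ := by
  have : 0 < K - 2 := by linarith
  rw [div_le_iff₀ (by positivity)] at hγ
  linarith

lemma nonneg_of_gamma0_le (hK : 2 < K) (hδ : 1 ≤ (K - 1) * δ)
    (hγ : (K - 1) * ((K - 1) * δ - 1) / (K * (K - 2) * δ) ≤ γ) : 0 ≤ γ := by
  refine le_trans (div_nonneg ?_ ?_) hγ
  · nlinarith
  · have : 0 < δ := by nlinarith
    have : 0 < K - 2 := by linarith
    positivity

lemma mul_sub_add_one_nonneg_of_gamma0_le (hK : 2 < K) (hδ : 1 ≤ (K - 1) * δ) (hδ1 : δ ≤ 1)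
    (hγ : (K - 1) * ((K - 1) * δ - 1) / (K * (K - 2) * δ) ≤ γ) :
    0 ≤ (K - 2) * (δ + 1) * γ - (K - 1) * δ + 1 := by
  have hδ0 : 0 < δ := by nlinarith
  have hkey := mul_one_sub_le_of_gamma0_le hK hδ0 hγ
  nlinarith [mul_nonneg (sub_nonneg.2 hδ) (by linarith : 0 ≤ K - 1 - δ)]

end Scalar

noncomputable section

variable {k : ℕ}

def spiderR (i0 i1 : Fin k) (δ : ℝ) (i j : Fin k) : ℝ :=
  if i = j then 0 else
    if i = i0 then (if j = i1 then δ else (1 - δ) / ((k : ℝ) - 2))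
    else 1 / ((k : ℝ) - 1)

def spiderDiag (α : Fin k → ℝ) (i0 i1 : Fin k) (δ γ : ℝ) (i : Fin k) : ℝ :=
  if i = i0 then (k : ℝ) * ((k : ℝ) - 2) * (1 - γ) / ((((k : ℝ) - 1) - δ) * ((k : ℝ) - 1))
  else if i = i1 then 1 - (α i0 / α i1) *
      (((k : ℝ) - 2) * (δ + 1) * γ - ((k : ℝ) - 1) * δ + 1) / (((k : ℝ) - 1) - δ)
  else 1 - (α i0 / α i) * γ

-- The off-diagonal entries are forced by `α_j (1 - (k - 1) p_jj r_ji) = (k - 1) α_i p_ij`.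
def compatibleP (α : Fin k → ℝ) (R : Fin k → Fin k → ℝ) (d : Fin k → ℝ) (i j : Fin k) : ℝ :=
  if i = j then d i else α j * (1 - ((k : ℝ) - 1) * d j * R j i) / (α i * ((k : ℝ) - 1))

section Compatible

variable {α : Fin k → ℝ} {R : Fin k → Fin k → ℝ} {d : Fin k → ℝ}

lemma compatibleP_compat {i j : Fin k} (hij : i ≠ j) (hα : α i ≠ 0) :
    α j * (1 - ((k : ℝ) - 1) * compatibleP α R d j j * R j i)
      = ((k : ℝ) - 1) * α i * compatibleP α R d i j := by
  have hk : (k : ℝ) - 1 ≠ 0 := (sub_pos.2 (Fin.one_lt_natCast_of_ne hij)).ne'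
  simp only [compatibleP, ↓reduceIte, if_neg hij]
  field_simp

lemma compatibleP_nonneg (hα : ∀ i, 0 ≤ α i) (hd : ∀ i, 0 ≤ d i)
    (hdR : ∀ i j, i ≠ j → ((k : ℝ) - 1) * d j * R j i ≤ 1) (i j : Fin k) :
    0 ≤ compatibleP α R d i j := by
  unfold compatibleP
  split_ifs with hij
  · exact hd i
  · have hk : (0 : ℝ) ≤ k - 1 := (sub_pos.2 (Fin.one_lt_natCast_of_ne hij)).le
    exact div_nonneg (mul_nonneg (hα j) (sub_nonneg.2 (hdR i j hij))) (mul_nonneg (hα i) hk)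

end Compatible

section Spider

variable {i0 i1 : Fin k} {δ γ : ℝ}

lemma spiderR_nonneg (hk : 2 ≤ k) (hδ0 : 0 ≤ δ) (hδ1 : δ ≤ 1) (i j : Fin k) :
    0 ≤ spiderR i0 i1 δ i j := by
  have hk' : (2 : ℝ) ≤ k := by exact_mod_cast hk
  unfold spiderR
  split_ifs
  · exact le_rfl
  · exact hδ0
  · exact div_nonneg (by linarith) (by linarith)
  · exact div_nonneg zero_le_one (by linarith)

lemma spiderR_row_sum (hk : 3 ≤ k) (h01 : i0 ≠ i1) (i : Fin k) :
    ∑ j, spiderR i0 i1 δ i j = 1 := by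
  have hk' : (3 : ℝ) ≤ k := by exact_mod_cast hk
  have hk1 : (k : ℝ) - 1 ≠ 0 := by linarith
  have hk2 : (k : ℝ) - 2 ≠ 0 := by linarith
  by_cases hi : i = i0
  · subst hi
    rw [sum_univ_eq_sum_add_of_eq_off {i, i1} (c := (1 - δ) / ((k : ℝ) - 2)) ?_]
    · simp [spiderR, h01, sum_pair h01, card_pair h01]
      field_simp
      ring
    · intro j hj
      simp only [mem_insert, mem_singleton, not_or] at hj
      simp [spiderR, Ne.symm hj.1, hj.2]
  · rw [sum_univ_eq_sum_add_of_eq_off {i} (c := 1 / ((k : ℝ) - 1)) ?_]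
    · simp [spiderR]
      field_simp
    · intro j hj
      simp only [mem_singleton] at hj
      simp [spiderR, Ne.symm hj, hi]

variable {α : Fin k → ℝ}

lemma spiderDiag_nonneg (hk : 3 ≤ k) (hδ0 : 0 ≤ δ) (hδ1 : δ ≤ 1) (hγ1 : γ ≤ 1)
    (hα : ∀ j, 0 < α j) (hmin : ∀ j, α i0 ≤ α j) (i : Fin k) : 0 ≤ spiderDiag α i0 i1 δ γ i := by
  have hk' : (3 : ℝ) ≤ k := by exact_mod_cast hk
  have hratio : ∀ j, 0 ≤ α i0 / α j ∧ α i0 / α j ≤ 1 := fun j =>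
    ⟨div_nonneg (hα i0).le (hα j).le, div_le_one_of_le₀ (hmin j) (hα j).le⟩
  unfold spiderDiag
  split_ifs
  · exact div_nonneg (mul_nonneg (by nlinarith) (by linarith)) (by nlinarith)
  · obtain ⟨h0, h1⟩ := hratio i1
    have hE : ((k : ℝ) - 2) * (δ + 1) * γ - ((k : ℝ) - 1) * δ + 1 ≤ (k : ℝ) - 1 - δ := by
      have : 0 ≤ ((k : ℝ) - 2) * (δ + 1) := mul_nonneg (by linarith) (by linarith)
      nlinarith [mul_le_mul_of_nonneg_left hγ1 this]
    rw [sub_nonneg, div_le_one (by linarith)]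
    nlinarith [mul_le_mul_of_nonneg_left hE h0]
  · obtain ⟨h0, h1⟩ := hratio i
    nlinarith

lemma spiderDiag_le_one (hk : 3 ≤ k) (hδ : 1 ≤ ((k : ℝ) - 1) * δ) (hδ1 : δ ≤ 1)
    (hγ : ((k : ℝ) - 1) * (((k : ℝ) - 1) * δ - 1) / ((k : ℝ) * ((k : ℝ) - 2) * δ) ≤ γ)
    (hα : ∀ j, 0 < α j) {j : Fin k} (hj : j ≠ i0) : spiderDiag α i0 i1 δ γ j ≤ 1 := by
  have hk' : (2 : ℝ) < k := by exact_mod_cast hk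
  have hratio : 0 ≤ α i0 / α j := div_nonneg (hα i0).le (hα j).le
  rw [spiderDiag, if_neg hj]
  split_ifs with hj1 <;> rw [sub_le_self_iff]
  · subst hj1
    exact div_nonneg (mul_nonneg hratio (mul_sub_add_one_nonneg_of_gamma0_le hk' hδ hδ1 hγ))
      (by linarith)
  · exact mul_nonneg hratio (nonneg_of_gamma0_le hk' hδ hγ)

lemma spiderDiag_mul_spiderR_le_one (hk : 3 ≤ k) (hδ : 1 ≤ ((k : ℝ) - 1) * δ) (hδ1 : δ ≤ 1)
    (hγ : ((k : ℝ) - 1) * (((k : ℝ) - 1) * δ - 1) / ((k : ℝ) * ((k : ℝ) - 2) * δ) ≤ γ)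
    (hγ1 : γ ≤ 1) (hα : ∀ j, 0 < α j) {i j : Fin k} (hij : i ≠ j) :
    ((k : ℝ) - 1) * spiderDiag α i0 i1 δ γ j * spiderR i0 i1 δ j i ≤ 1 := by
  have hk' : (2 : ℝ) < k := by exact_mod_cast hk
  have hδ0 : 0 < δ := by nlinarith
  have hkey := mul_one_sub_le_of_gamma0_le hk' hδ0 hγ
  have hkδ : 0 < (k : ℝ) - 1 - δ := by linarith
  have hk1 : (k : ℝ) - 1 ≠ 0 := by linarith
  have hk2 : (k : ℝ) - 2 ≠ 0 := by linarith
  unfold spiderR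
  rw [if_neg (Ne.symm hij)]
  split_ifs with hj0 hi1
  · subst hj0
    calc ((k : ℝ) - 1) * spiderDiag α j i1 δ γ j * δ
        = (k : ℝ) * ((k : ℝ) - 2) * δ * (1 - γ) / ((k : ℝ) - 1 - δ) := by
          rw [spiderDiag, if_pos rfl]; field_simp
      _ ≤ 1 := (div_le_one hkδ).2 hkey
  · subst hj0
    calc ((k : ℝ) - 1) * spiderDiag α j i1 δ γ j * ((1 - δ) / ((k : ℝ) - 2))
        = (k : ℝ) * (1 - γ) * (1 - δ) / ((k : ℝ) - 1 - δ) := by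
          rw [spiderDiag, if_pos rfl]; field_simp
      _ ≤ 1 := by
          rw [div_le_one hkδ]
          have : 0 ≤ (k : ℝ) * (1 - γ) := mul_nonneg (by linarith) (by linarith)
          nlinarith [mul_le_mul_of_nonneg_left (by linarith : 1 - δ ≤ ((k : ℝ) - 2) * δ) this]
  · rw [mul_comm, ← mul_assoc, one_div_mul_cancel hk1, one_mul]
    exact spiderDiag_le_one hk hδ hδ1 hγ hα hj0

lemma compatibleP_spider_apply_of_ne (hα : ∀ j, 0 < α j) {i j : Fin k} (hji : j ≠ i)
    (hj0 : j ≠ i0) (hj1 : j ≠ i1) :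
    compatibleP α (spiderR i0 i1 δ) (spiderDiag α i0 i1 δ γ) i j
      = α i0 * γ / (α i * ((k : ℝ) - 1)) := by
  have hk1 : (k : ℝ) - 1 ≠ 0 := (sub_pos.2 (Fin.one_lt_natCast_of_ne hji)).ne'
  have := (hα j).ne'
  simp only [compatibleP, spiderR, spiderDiag, if_neg (Ne.symm hji), if_neg hji, if_neg hj0,
    if_neg hj1]
  field_simp
  ring

lemma compatibleP_spider_row_sum (hk : 3 ≤ k) (hδ1 : δ ≤ 1) (hα : ∀ j, 0 < α j)
    (h01 : i0 ≠ i1) (i : Fin k) :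
    ∑ j, compatibleP α (spiderR i0 i1 δ) (spiderDiag α i0 i1 δ γ) i j = 1 := by
  have hk' : (3 : ℝ) ≤ k := by exact_mod_cast hk
  have hk1 : (k : ℝ) - 1 ≠ 0 := by linarith
  have hk2 : (k : ℝ) - 2 ≠ 0 := by linarith
  have hkδ : (k : ℝ) - 1 - δ ≠ 0 := by linarith
  have := (hα i0).ne'
  have := (hα i1).ne'
  have := (hα i).ne'
  rw [sum_univ_eq_sum_add_of_eq_off {i, i0, i1} fun j hj => by
    simp only [mem_insert, mem_singleton, not_or] at hj
    exact compatibleP_spider_apply_of_ne hα hj.1 hj.2.1 hj.2.2]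
  by_cases hi : i = i0 ∨ i = i1
  · obtain rfl | rfl := hi <;>
    · simp [sum_pair h01, card_pair h01, compatibleP, spiderR, spiderDiag, h01, h01.symm]
      field_simp
      ring
  · obtain ⟨hi0, hi1⟩ := not_or.1 hi
    simp [sum_insert, card_insert_of_notMem, sum_pair h01, card_pair h01, compatibleP, spiderR,
      spiderDiag, h01.symm, hi0, hi1, Ne.symm hi0, Ne.symm hi1]
    field_simp
    ring

end Spider

lemma eq_compatibleP_spider {i0 i1 : Fin k} {δ : ℝ} {α : Fin k → ℝ} {P : Fin k → Fin k → ℝ}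
    {d : Fin k → ℝ}
    (hP : ∀ i j, P i j = if i = j then d i else
      if j = i0 then
        (if i = i1 then α i0 * (1 - ((k : ℝ) - 1) * δ * d i0) / (α i1 * ((k : ℝ) - 1))
         else α i0 * (1 - (((k : ℝ) - 1) / ((k : ℝ) - 2)) * (1 - δ) * d i0) / (α i * ((k : ℝ) - 1)))
      else α j * (1 - d j) / (α i * ((k : ℝ) - 1))) :
    P = compatibleP α (spiderR i0 i1 δ) d := by
  funext i j
  rw [hP, compatibleP]
  split_ifs with hij hj0 hi1
  · rfl
  · subst hj0 hi1
    simp [spiderR, Ne.symm hij]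
    ring
  · subst hj0
    simp [spiderR, Ne.symm hij, hi1]
    ring
  · have hk1 : (k : ℝ) - 1 ≠ 0 := (sub_pos.2 (Fin.one_lt_natCast_of_ne hij)).ne'
    simp [spiderR, Ne.symm hij, hj0]
    field_simp

end

theorem stmt_5_general (k : ℕ) (hk : 3 ≤ k)
    (i0 i1 : Fin k) (hi0 : (i0 : ℕ) = 0) (hi1 : (i1 : ℕ) = 1)
    (δ γ γ₀ : ℝ)
    (hδ : δ ∈ Set.Icc (1 / ((k : ℝ) - 1)) 1)
    (hγ₀ : γ₀ = ((k : ℝ) - 1) * (((k : ℝ) - 1) * δ - 1) / ((k : ℝ) * ((k : ℝ) - 2) * δ))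
    (hγ : γ ∈ Set.Icc γ₀ 1)
    (α : Fin k → ℝ) (hαpos : ∀ j, 0 < α j)
    (hαmono : Monotone α)
    (R P : Fin k → Fin k → ℝ) (Pd : Fin k → ℝ)
    (hR : ∀ i j, R i j = if i = j then 0 else
      if i = i0 then (if j = i1 then δ else (1 - δ) / ((k : ℝ) - 2))
      else 1 / ((k : ℝ) - 1))
    (hPd0 : Pd i0 = (k : ℝ) * ((k : ℝ) - 2) * (1 - γ) / ((((k : ℝ) - 1) - δ) * ((k : ℝ) - 1)))
    (hPd1 : Pd i1 = 1 - (α i0 / α i1) *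
      (((k : ℝ) - 2) * (δ + 1) * γ - ((k : ℝ) - 1) * δ + 1) / (((k : ℝ) - 1) - δ))
    (hPdi : ∀ i : Fin k, 2 ≤ (i : ℕ) → Pd i = 1 - (α i0 / α i) * γ)
    (hP : ∀ i j, P i j = if i = j then Pd i else
      if j = i0 then
        (if i = i1 then α i0 * (1 - ((k : ℝ) - 1) * δ * Pd i0) / (α i1 * ((k : ℝ) - 1))
         else α i0 * (1 - (((k : ℝ) - 1) / ((k : ℝ) - 2)) * (1 - δ) * Pd i0) / (α i * ((k : ℝ) - 1)))
      else α j * (1 - Pd j) / (α i * ((k : ℝ) - 1))) :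
    (∀ i j, 0 ≤ R i j) ∧ (∀ i, ∑ j, R i j = 1) ∧
    (∀ i j, 0 ≤ P i j) ∧ (∀ i, ∑ j, P i j = 1) ∧
    (∀ i j, i ≠ j →
      α j * (1 - ((k : ℝ) - 1) * P j j * R j i) = ((k : ℝ) - 1) * α i * P i j) := by
  obtain ⟨hδ, hδ1⟩ := hδ
  obtain ⟨hγ, hγ1⟩ := hγ
  subst hγ₀
  have h01 : i0 ≠ i1 := Fin.ne_of_val_ne (by omega)
  have hmin : ∀ j, α i0 ≤ α j := fun j => hαmono (Fin.le_def.2 (by omega))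
  have hk1 : (0 : ℝ) < k - 1 := by
    have : (3 : ℝ) ≤ k := by exact_mod_cast hk
    linarith
  have hδ' : 1 ≤ ((k : ℝ) - 1) * δ := by rwa [div_le_iff₀' hk1] at hδ
  have hδ0 : 0 ≤ δ := by nlinarith
  obtain rfl : Pd = spiderDiag α i0 i1 δ γ := by
    funext i
    unfold spiderDiag
    split_ifs with h0 h1
    · rw [h0, hPd0]
    · rw [h1, hPd1]
    · exact hPdi i (by have := Fin.val_ne_of_ne h0; have := Fin.val_ne_of_ne h1; omega)
  obtain rfl : R = spiderR i0 i1 δ := funext₂ hR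
  obtain rfl := eq_compatibleP_spider hP
  exact ⟨spiderR_nonneg (by omega) hδ0 hδ1, spiderR_row_sum hk h01,
    compatibleP_nonneg (fun i => (hαpos i).le) (spiderDiag_nonneg hk hδ0 hδ1 hγ1 hαpos hmin)
      (fun _ _ hij => spiderDiag_mul_spiderR_le_one hk hδ' hδ1 hγ hγ1 hαpos hij),
    compatibleP_spider_row_sum hk hδ1 hαpos h01,
    fun _ _ hij => compatibleP_compat hij (hαpos _).ne'⟩

theorem stmt_5 (k : ℕ) (hk : 3 ≤ k)
    (i0 i1 : Fin k) (hi0 : (i0 : ℕ) = 0) (hi1 : (i1 : ℕ) = 1)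
    (δ γ γ₀ : ℝ)
    (hδ : δ ∈ Set.Icc (1 / ((k : ℝ) - 1)) 1)
    (hγ₀ : γ₀ = ((k : ℝ) - 1) * (((k : ℝ) - 1) * δ - 1) / ((k : ℝ) * ((k : ℝ) - 2) * δ))
    (hγ : γ ∈ Set.Icc γ₀ 1)
    (α : Fin k → ℝ) (hαpos : ∀ j, 0 < α j) (hαsum : ∑ j, α j = 1)
    (hαmono : Monotone α)
    (R P : Fin k → Fin k → ℝ) (Pd : Fin k → ℝ)
    (hR : ∀ i j, R i j = if i = j then 0 else
      if i = i0 then (if j = i1 then δ else (1 - δ) / ((k : ℝ) - 2))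
      else 1 / ((k : ℝ) - 1))
    (hPd0 : Pd i0 = (k : ℝ) * ((k : ℝ) - 2) * (1 - γ) / ((((k : ℝ) - 1) - δ) * ((k : ℝ) - 1)))
    (hPd1 : Pd i1 = 1 - (α i0 / α i1) *
      (((k : ℝ) - 2) * (δ + 1) * γ - ((k : ℝ) - 1) * δ + 1) / (((k : ℝ) - 1) - δ))
    (hPdi : ∀ i : Fin k, 2 ≤ (i : ℕ) → Pd i = 1 - (α i0 / α i) * γ)
    (hP : ∀ i j, P i j = if i = j then Pd i else
      if j = i0 then
        (if i = i1 then α i0 * (1 - ((k : ℝ) - 1) * δ * Pd i0) / (α i1 * ((k : ℝ) - 1))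
         else α i0 * (1 - (((k : ℝ) - 1) / ((k : ℝ) - 2)) * (1 - δ) * Pd i0) / (α i * ((k : ℝ) - 1)))
      else α j * (1 - Pd j) / (α i * ((k : ℝ) - 1))) :
    (∀ i j, 0 ≤ R i j) ∧ (∀ i, ∑ j, R i j = 1) ∧
    (∀ i j, 0 ≤ P i j) ∧ (∀ i, ∑ j, P i j = 1) ∧
    (∀ i j, i ≠ j →
      α j * (1 - ((k : ℝ) - 1) * P j j * R j i) = ((k : ℝ) - 1) * α i * P i j) :=
  stmt_5_general k hk i0 i1 hi0 hi1 δ γ γ₀ hδ hγ₀ hγ α hαpos hαmono R P Pd hR hPd0 hPd1 hPdi hP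
end

section
/- Let k ≥ 2, let W^{3,1}(ℝ⁺) functions ψ(·,j) (j=1,…,k) be given, and define on the index set {1,…,k}² the functions φ_ε(·,i,j) = ψ(·,j) + (ε/k)ψ'(·,j)v_{i,j} + (ε/k)²ψ''(·,j)v_{i,j}, where v_{i,i} = k−1 and v_{i,j} = −1 for i ≠ j. Let 𝔄 act by (𝔄φ)(·,i,i) = (k−1)∂_x φ(·,i,i) and (𝔄φ)(·,i,j) = −∂_x φ(·,i,j) for i ≠ j, and let (𝒬φ)(·,i,j) = Σ_l q^j_{l,i} φ(·,l,j) with Q^j symmetric, q^j_{j,j} = −(k−1), q^j_{j,i} = 1 for i ≠ j. Then ε⁻¹𝔄φ_ε + ε⁻²𝒬φ_ε converges in L¹, as ε → 0+, to (1/k)(ψ'' w − ψ'' v), where w_{i,i} = (k−1)², w_{i,j} = 1 for i ≠ j (componentwise: the (i,j)-entry times ψ''(·,j)). -/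
open Matrix

theorem stmt_16 (k : ℕ) (hk : 2 ≤ k)
    (ψ ψ' ψ'' ψ''' : Fin k → ℝ → ℝ)
    (hd1 : ∀ j, ∀ x ∈ Set.Ici (0 : ℝ), HasDerivWithinAt (ψ j) (ψ' j x) (Set.Ici 0) x)
    (hd2 : ∀ j, ∀ x ∈ Set.Ici (0 : ℝ), HasDerivWithinAt (ψ' j) (ψ'' j x) (Set.Ici 0) x)
    (hd3 : ∀ j, ∀ x ∈ Set.Ici (0 : ℝ), HasDerivWithinAt (ψ'' j) (ψ''' j x) (Set.Ici 0) x)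
    (hint : ∀ j, MeasureTheory.IntegrableOn (ψ j) (Set.Ioi 0) ∧
      MeasureTheory.IntegrableOn (ψ' j) (Set.Ioi 0) ∧
      MeasureTheory.IntegrableOn (ψ'' j) (Set.Ioi 0) ∧
      MeasureTheory.IntegrableOn (ψ''' j) (Set.Ioi 0))
    (Q : Fin k → Matrix (Fin k) (Fin k) ℝ)
    (hsym : ∀ j, (Q j)ᵀ = Q j)
    (hoff : ∀ j i l, i ≠ l → 0 ≤ Q j i l)
    (hrow : ∀ j i, ∑ l, Q j i l = 0)
    (hdiag : ∀ j, Q j j j = -((k : ℝ) - 1))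
    (hone : ∀ j i, i ≠ j → Q j j i = 1)
    (v w : Fin k → Fin k → ℝ)
    (hv : ∀ i j, v i j = if i = j then (k : ℝ) - 1 else -1)
    (hw : ∀ i j, w i j = if i = j then ((k : ℝ) - 1) ^ 2 else 1) :
    Filter.Tendsto (fun eps : ℝ => ∑ i, ∑ j, ∫ x in Set.Ioi (0 : ℝ),
        |eps⁻¹ * (v i j * (ψ' j x + (eps / k) * v i j * ψ'' j x
            + (eps / k) ^ 2 * v i j * ψ''' j x))
          + eps⁻¹ ^ 2 * (∑ l, Q j l i * (ψ j x + (eps / k) * v l j * ψ' j x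
            + (eps / k) ^ 2 * v l j * ψ'' j x))
          - (1 / (k : ℝ)) * (ψ'' j x * w i j - ψ'' j x * v i j)|)
      (nhdsWithin 0 (Set.Ioi 0)) (nhds 0) := by
  have hk0 : (k : ℝ) ≠ 0 := by
    have : (2 : ℝ) ≤ (k : ℝ) := by exact_mod_cast hk
    linarith
  -- Q j j i = -(v i j)
  have hQji : ∀ j i : Fin k, Q j j i = -(v i j) := by
    intro j i
    rcases eq_or_ne i j with rfl | h
    · rw [hdiag, hv]; simp
    · rw [hone j i h, hv]; simp [h]
  -- column sums vanish
  have hcol : ∀ j i : Fin k, ∑ l, Q j l i = 0 := by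
    intro j i
    calc ∑ l, Q j l i = ∑ l, (Q j)ᵀ i l := by
          simp [Matrix.transpose_apply]
      _ = ∑ l, Q j i l := by rw [hsym]
      _ = 0 := hrow j i
  -- weighted column sums
  have hsumv : ∀ j i : Fin k, ∑ l, Q j l i * v l j = -((k : ℝ) * v i j) := by
    intro j i
    have h1 : ∀ l : Fin k, Q j l i * v l j
        = (k : ℝ) * (if l = j then Q j l i else 0) - Q j l i := by
      intro l
      rw [hv]
      by_cases h : l = j <;> simp [h] <;> ring
    rw [Finset.sum_congr rfl fun l _ => h1 l, Finset.sum_sub_distrib, hcol,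
      ← Finset.mul_sum, Finset.sum_ite_eq' Finset.univ j (fun l => Q j l i)]
    simp [hQji]
  have hwv : ∀ i j : Fin k, w i j = v i j ^ 2 := by
    intro i j
    rw [hw, hv]
    split <;> norm_num
  -- the simplified value of each integral
  set D : ℝ := ∑ i : Fin k, ∑ j : Fin k,
    (v i j ^ 2 / (k : ℝ) ^ 2) * ∫ x in Set.Ioi (0 : ℝ), |ψ''' j x| with hD
  have hmain : ∀ eps ∈ Set.Ioi (0 : ℝ), (∑ i, ∑ j, ∫ x in Set.Ioi (0 : ℝ),
        |eps⁻¹ * (v i j * (ψ' j x + (eps / k) * v i j * ψ'' j x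
            + (eps / k) ^ 2 * v i j * ψ''' j x))
          + eps⁻¹ ^ 2 * (∑ l, Q j l i * (ψ j x + (eps / k) * v l j * ψ' j x
            + (eps / k) ^ 2 * v l j * ψ'' j x))
          - (1 / (k : ℝ)) * (ψ'' j x * w i j - ψ'' j x * v i j)|) = eps * D := by
    intro eps heps
    have heps0 : eps ≠ 0 := ne_of_gt heps
    have hptwise : ∀ (i j : Fin k) (x : ℝ),
        |eps⁻¹ * (v i j * (ψ' j x + (eps / k) * v i j * ψ'' j x
            + (eps / k) ^ 2 * v i j * ψ''' j x))
          + eps⁻¹ ^ 2 * (∑ l, Q j l i * (ψ j x + (eps / k) * v l j * ψ' j x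
            + (eps / k) ^ 2 * v l j * ψ'' j x))
          - (1 / (k : ℝ)) * (ψ'' j x * w i j - ψ'' j x * v i j)|
        = eps * (v i j ^ 2 / (k : ℝ) ^ 2) * |ψ''' j x| := by
      intro i j x
      have hexpand : ∑ l, Q j l i * (ψ j x + (eps / k) * v l j * ψ' j x
            + (eps / k) ^ 2 * v l j * ψ'' j x)
          = (∑ l, Q j l i) * ψ j x
            + (∑ l, Q j l i * v l j) * ((eps / k) * ψ' j x)
            + (∑ l, Q j l i * v l j) * ((eps / k) ^ 2 * ψ'' j x) := by
        rw [Finset.sum_mul, Finset.sum_mul, Finset.sum_mul, ← Finset.sum_add_distrib,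
          ← Finset.sum_add_distrib]
        exact Finset.sum_congr rfl fun l _ => by ring
      rw [hexpand, hcol, hsumv, hwv]
      have heq : eps⁻¹ * (v i j * (ψ' j x + (eps / k) * v i j * ψ'' j x
            + (eps / k) ^ 2 * v i j * ψ''' j x))
          + eps⁻¹ ^ 2 * (0 * ψ j x + (-((k : ℝ) * v i j)) * ((eps / k) * ψ' j x)
            + (-((k : ℝ) * v i j)) * ((eps / k) ^ 2 * ψ'' j x))
          - (1 / (k : ℝ)) * (ψ'' j x * v i j ^ 2 - ψ'' j x * v i j)
          = eps * (v i j ^ 2 / (k : ℝ) ^ 2) * ψ''' j x := by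
        field_simp
        ring
      rw [heq, abs_mul, abs_of_nonneg (mul_nonneg (le_of_lt heps) (by positivity))]
    have hint3 : ∀ (i j : Fin k), (∫ x in Set.Ioi (0 : ℝ),
        |eps⁻¹ * (v i j * (ψ' j x + (eps / k) * v i j * ψ'' j x
            + (eps / k) ^ 2 * v i j * ψ''' j x))
          + eps⁻¹ ^ 2 * (∑ l, Q j l i * (ψ j x + (eps / k) * v l j * ψ' j x
            + (eps / k) ^ 2 * v l j * ψ'' j x))
          - (1 / (k : ℝ)) * (ψ'' j x * w i j - ψ'' j x * v i j)|)
        = eps * ((v i j ^ 2 / (k : ℝ) ^ 2) * ∫ x in Set.Ioi (0 : ℝ), |ψ''' j x|) := by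
      intro i j
      rw [show (fun x => |eps⁻¹ * (v i j * (ψ' j x + (eps / k) * v i j * ψ'' j x
            + (eps / k) ^ 2 * v i j * ψ''' j x))
          + eps⁻¹ ^ 2 * (∑ l, Q j l i * (ψ j x + (eps / k) * v l j * ψ' j x
            + (eps / k) ^ 2 * v l j * ψ'' j x))
          - (1 / (k : ℝ)) * (ψ'' j x * w i j - ψ'' j x * v i j)|)
        = fun x => eps * (v i j ^ 2 / (k : ℝ) ^ 2) * |ψ''' j x| from funext fun x => hptwise i j x]
      rw [MeasureTheory.integral_const_mul, mul_assoc]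
    calc (∑ i, ∑ j, ∫ x in Set.Ioi (0 : ℝ),
        |eps⁻¹ * (v i j * (ψ' j x + (eps / k) * v i j * ψ'' j x
            + (eps / k) ^ 2 * v i j * ψ''' j x))
          + eps⁻¹ ^ 2 * (∑ l, Q j l i * (ψ j x + (eps / k) * v l j * ψ' j x
            + (eps / k) ^ 2 * v l j * ψ'' j x))
          - (1 / (k : ℝ)) * (ψ'' j x * w i j - ψ'' j x * v i j)|)
        = ∑ i : Fin k, ∑ j : Fin k, eps * ((v i j ^ 2 / (k : ℝ) ^ 2)
            * ∫ x in Set.Ioi (0 : ℝ), |ψ''' j x|) := by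
          exact Finset.sum_congr rfl fun i _ => Finset.sum_congr rfl fun j _ => hint3 i j
      _ = eps * D := by
          rw [hD, Finset.mul_sum]
          exact Finset.sum_congr rfl fun i _ => by rw [Finset.mul_sum]
  have hlim : Filter.Tendsto (fun eps : ℝ => eps * D) (nhdsWithin 0 (Set.Ioi 0)) (nhds 0) := by
    have : Filter.Tendsto (fun eps : ℝ => eps * D) (nhds 0) (nhds (0 * D)) :=
      (continuous_id.mul continuous_const).tendsto 0
    rw [zero_mul] at this
    exact this.mono_left nhdsWithin_le_nhds
  refine hlim.congr' ?_
  filter_upwards [self_mem_nhdsWithin] with eps heps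
  exact (hmain eps heps).symm
end
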